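/- arXiv:1905.00257 — 6 statements merged into one kernel-verified Lean document; each statement's English description precedes it below -/
import Mathlib

section
/- For every r > 0 and every λ ∈ ℂ, the characteristic polynomial of B(r) satisfies det(B(r) − λ·I₄) = λ⁴ − 2(r^{2ρ}+r^{2θ})λ³ + ((r^{2ρ}+r^{2θ})² + (a²+b²)r²)λ² − (a²+b²)r²(r^{2ρ}+r^{2θ})λ + a²b²r⁴. -/
/-!
`B(r) - λ` only couples the coordinates 1, 3 and the coordinates 2, 4, so after reordering it is
block diagonal with blocks `[[c - ibr - λ, c], [c, c + ibr - λ]]` and the same with `a`, where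
`c = (r^{2ρ} + r^{2θ})/2`. Each block has determinant `λ² - 2cλ + b²r²` (resp. `a²r²`), and the
characteristic polynomial is their product.
-/

noncomputable section

/-- The matrix `B₀` with rows (1,0,1,0), (0,1,0,1), (1,0,1,0), (0,1,0,1). -/
def B0 : Matrix (Fin 4) (Fin 4) ℂ :=
  !![1,0,1,0; 0,1,0,1; 1,0,1,0; 0,1,0,1]

/-- The matrix `B₁ = diag(−b, −a, b, a)`. -/
def B1 (a b : ℝ) : Matrix (Fin 4) (Fin 4) ℂ :=
  !![-(b:ℂ),0,0,0; 0,-(a:ℂ),0,0; 0,0,(b:ℂ),0; 0,0,0,(a:ℂ)]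

/-- The coefficient matrix `B(r) = (1/2)(r^{2ρ}+r^{2θ})B₀ + i r B₁`. -/
def Bmat (a b ρ θ r : ℝ) : Matrix (Fin 4) (Fin 4) ℂ :=
  (((1/2) * (r ^ (2*ρ) + r ^ (2*θ)) : ℝ) : ℂ) • B0 + (Complex.I * (r : ℂ)) • B1 a b

open Complex

theorem Matrix.det_fin_four_of_interleaved_blocks {R : Type*} [CommRing R]
    (p q u v p' q' u' v' : R) :
    !![p, 0, q, 0; 0, p', 0, q'; u, 0, v, 0; 0, u', 0, v'].det
      = (p * v - q * u) * (p' * v' - q' * u') := by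
  simp [Matrix.det_succ_row_zero, Fin.sum_univ_succ, Fin.succAbove]
  ring

theorem det_Bmat_sub_smul_one (a b ρ θ r : ℝ) (lam : ℂ) :
    (Bmat a b ρ θ r - lam • (1 : Matrix (Fin 4) (Fin 4) ℂ)).det =
      (lam ^ 2 - ((r ^ (2*ρ) + r ^ (2*θ) : ℝ) : ℂ) * lam + (b : ℂ) ^ 2 * (r : ℂ) ^ 2) *
      (lam ^ 2 - ((r ^ (2*ρ) + r ^ (2*θ) : ℝ) : ℂ) * lam + (a : ℂ) ^ 2 * (r : ℂ) ^ 2) := by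
  set c : ℂ := (((1/2) * (r ^ (2*ρ) + r ^ (2*θ)) : ℝ) : ℂ) with hc
  have hB : Bmat a b ρ θ r - lam • 1 =
      !![c - I * (r * b) - lam, 0, c, 0; 0, c - I * (r * a) - lam, 0, c;
         c, 0, c + I * (r * b) - lam, 0; 0, c, 0, c + I * (r * a) - lam] := by
    ext i j; fin_cases i <;> fin_cases j <;> simp [Bmat, B0, B1, hc] <;> ring
  have hblock (x : ℂ) : (c - I * x - lam) * (c + I * x - lam) - c * c
      = lam ^ 2 - 2 * c * lam + x ^ 2 := by
    linear_combination (-x ^ 2) * I_sq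
  have hs : ((r ^ (2*ρ) + r ^ (2*θ) : ℝ) : ℂ) = 2 * c := by rw [hc]; push_cast; ring
  rw [hB, Matrix.det_fin_four_of_interleaved_blocks, hblock, hblock, hs]
  ring

theorem stmt0_general (a b ρ θ : ℝ)
    (r : ℝ) (lam : ℂ) :
    (Bmat a b ρ θ r - lam • (1 : Matrix (Fin 4) (Fin 4) ℂ)).det =
      lam ^ 4 - 2 * ((r ^ (2*ρ) + r ^ (2*θ) : ℝ) : ℂ) * lam ^ 3
        + (((r ^ (2*ρ) + r ^ (2*θ) : ℝ) : ℂ) ^ 2 + ((a^2 + b^2 : ℝ) : ℂ) * (r : ℂ) ^ 2) * lam ^ 2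
        - ((a^2 + b^2 : ℝ) : ℂ) * (r : ℂ) ^ 2 * ((r ^ (2*ρ) + r ^ (2*θ) : ℝ) : ℂ) * lam
        + ((a^2 * b^2 : ℝ) : ℂ) * (r : ℂ) ^ 4 := by
  rw [det_Bmat_sub_smul_one]
  push_cast
  ring

theorem stmt0 (a b ρ θ : ℝ) (ha : 0 < a) (hab : a < b)
    (hρ0 : 0 ≤ ρ) (hρ : ρ < 1/2) (hθ : 1/2 < θ) (hθ1 : θ ≤ 1)
    (r : ℝ) (hr : 0 < r) (lam : ℂ) :
    (Bmat a b ρ θ r - lam • (1 : Matrix (Fin 4) (Fin 4) ℂ)).det =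
      lam ^ 4 - 2 * ((r ^ (2*ρ) + r ^ (2*θ) : ℝ) : ℂ) * lam ^ 3
        + (((r ^ (2*ρ) + r ^ (2*θ) : ℝ) : ℂ) ^ 2 + ((a^2 + b^2 : ℝ) : ℂ) * (r : ℂ) ^ 2) * lam ^ 2
        - ((a^2 + b^2 : ℝ) : ℂ) * (r : ℂ) ^ 2 * ((r ^ (2*ρ) + r ^ (2*θ) : ℝ) : ℂ) * lam
        + ((a^2 * b^2 : ℝ) : ℂ) * (r : ℂ) ^ 4 :=
  stmt0_general a b ρ θ r lam

end
end

section
/- For every r > 0 there is no real number d ≠ 0 satisfying simultaneously d⁴ − ((r^{2ρ}+r^{2θ})² + (a²+b²)r²)d² + a²b²r⁴ = 0 and d·(r^{2ρ}+r^{2θ})·(2d² − (a²+b²)r²) = 0; indeed these two equations together with d ≠ 0 and r > 0 would force −(b²−a²)²r² = 2(a²+b²)(r^{2ρ}+r^{2θ})², which is impossible since b > a > 0. -/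
/-!
With `s = r^{2ρ} + r^{2θ} > 0` and `d ≠ 0`, the imaginary part forces `2 d² = (a² + b²) r²`.
Substituting this into four times the real part eliminates `d` and leaves
`(−(b² − a²)² r² − 2 (a² + b²) s²) r² = 0`. In the resulting identity the left side is `≤ 0`,
while the right side is `> 0` because `s ≠ 0` and `a < b` rules out `a = b = 0`.
-/

namespace ImaginaryEigenvalue

variable {a b d r s : ℝ}

lemma two_mul_sq_eq_of_imag_part_eq_zero (hd : d ≠ 0) (hs : s ≠ 0)
    (him : d * s * (2 * d ^ 2 - (a ^ 2 + b ^ 2) * r ^ 2) = 0) :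
    2 * d ^ 2 = (a ^ 2 + b ^ 2) * r ^ 2 := by
  have := (mul_eq_zero.1 him).resolve_left (mul_ne_zero hd hs)
  linarith

lemma neg_sq_sub_mul_eq_of_real_part_eq_zero (hr : r ≠ 0)
    (hre : d ^ 4 - (s ^ 2 + (a ^ 2 + b ^ 2) * r ^ 2) * d ^ 2 + a ^ 2 * b ^ 2 * r ^ 4 = 0)
    (hd : 2 * d ^ 2 = (a ^ 2 + b ^ 2) * r ^ 2) :
    -((b ^ 2 - a ^ 2) ^ 2) * r ^ 2 = 2 * (a ^ 2 + b ^ 2) * s ^ 2 := by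
  have h : (-((b ^ 2 - a ^ 2) ^ 2) * r ^ 2 - 2 * (a ^ 2 + b ^ 2) * s ^ 2) * r ^ 2 = 0 := by
    linear_combination 4 * hre + ((a ^ 2 + b ^ 2) * r ^ 2 + 2 * s ^ 2 - 2 * d ^ 2) * hd
  have := (mul_eq_zero.1 h).resolve_right (pow_ne_zero 2 hr)
  linarith

lemma neg_sq_sub_mul_ne (hab : a < b) (hs : s ≠ 0) :
    -((b ^ 2 - a ^ 2) ^ 2) * r ^ 2 ≠ 2 * (a ^ 2 + b ^ 2) * s ^ 2 := by
  have hab2 : 0 < a ^ 2 + b ^ 2 := by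
    nlinarith [sq_nonneg (a + b), pow_pos (sub_pos.2 hab) 2]
  have : 0 < 2 * (a ^ 2 + b ^ 2) * s ^ 2 := by positivity
  nlinarith [sq_nonneg (b ^ 2 - a ^ 2), sq_nonneg r]

end ImaginaryEigenvalue

open ImaginaryEigenvalue in
theorem stmt1_general (a b ρ θ : ℝ) (hab : a < b)
    (r : ℝ) (hr : 0 < r) :
    (¬ ∃ d : ℝ, d ≠ 0 ∧
        d ^ 4 - ((r ^ (2*ρ) + r ^ (2*θ)) ^ 2 + (a^2 + b^2) * r ^ 2) * d ^ 2
          + a^2 * b^2 * r ^ 4 = 0 ∧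
        d * (r ^ (2*ρ) + r ^ (2*θ)) * (2 * d ^ 2 - (a^2 + b^2) * r ^ 2) = 0) ∧
    (∀ d : ℝ, d ≠ 0 →
        d ^ 4 - ((r ^ (2*ρ) + r ^ (2*θ)) ^ 2 + (a^2 + b^2) * r ^ 2) * d ^ 2
          + a^2 * b^2 * r ^ 4 = 0 →
        d * (r ^ (2*ρ) + r ^ (2*θ)) * (2 * d ^ 2 - (a^2 + b^2) * r ^ 2) = 0 →
        -((b^2 - a^2) ^ 2) * r ^ 2 = 2 * (a^2 + b^2) * (r ^ (2*ρ) + r ^ (2*θ)) ^ 2) ∧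
    ¬ (-((b^2 - a^2) ^ 2) * r ^ 2 = 2 * (a^2 + b^2) * (r ^ (2*ρ) + r ^ (2*θ)) ^ 2) := by
  have hs : r ^ (2*ρ) + r ^ (2*θ) ≠ 0 := by positivity
  have forced : ∀ d : ℝ, d ≠ 0 →
      d ^ 4 - ((r ^ (2*ρ) + r ^ (2*θ)) ^ 2 + (a^2 + b^2) * r ^ 2) * d ^ 2
        + a^2 * b^2 * r ^ 4 = 0 →
      d * (r ^ (2*ρ) + r ^ (2*θ)) * (2 * d ^ 2 - (a^2 + b^2) * r ^ 2) = 0 →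
      -((b^2 - a^2) ^ 2) * r ^ 2 = 2 * (a^2 + b^2) * (r ^ (2*ρ) + r ^ (2*θ)) ^ 2 :=
    fun d hd hre him => neg_sq_sub_mul_eq_of_real_part_eq_zero hr.ne' hre
      (two_mul_sq_eq_of_imag_part_eq_zero hd hs him)
  have impossible := neg_sq_sub_mul_ne (r := r) hab hs
  exact ⟨fun ⟨d, hd, hre, him⟩ => impossible (forced d hd hre him), forced, impossible⟩

/-- No nonzero real `d` solves simultaneously the real and imaginary parts of the
characteristic equation of `B(r)` at a purely imaginary eigenvalue `λ = i d`;
indeed the two equations force `−(b²−a²)²r² = 2(a²+b²)(r^{2ρ}+r^{2θ})²`,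
which is impossible since `b > a > 0`. -/
theorem stmt1 (a b ρ θ : ℝ) (ha : 0 < a) (hab : a < b)
    (hρ0 : 0 ≤ ρ) (hρ : ρ < 1/2) (hθ : 1/2 < θ) (hθ1 : θ ≤ 1)
    (r : ℝ) (hr : 0 < r) :
    (¬ ∃ d : ℝ, d ≠ 0 ∧
        d ^ 4 - ((r ^ (2*ρ) + r ^ (2*θ)) ^ 2 + (a^2 + b^2) * r ^ 2) * d ^ 2
          + a^2 * b^2 * r ^ 4 = 0 ∧
        d * (r ^ (2*ρ) + r ^ (2*θ)) * (2 * d ^ 2 - (a^2 + b^2) * r ^ 2) = 0) ∧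
    (∀ d : ℝ, d ≠ 0 →
        d ^ 4 - ((r ^ (2*ρ) + r ^ (2*θ)) ^ 2 + (a^2 + b^2) * r ^ 2) * d ^ 2
          + a^2 * b^2 * r ^ 4 = 0 →
        d * (r ^ (2*ρ) + r ^ (2*θ)) * (2 * d ^ 2 - (a^2 + b^2) * r ^ 2) = 0 →
        -((b^2 - a^2) ^ 2) * r ^ 2 = 2 * (a^2 + b^2) * (r ^ (2*ρ) + r ^ (2*θ)) ^ 2) ∧
    ¬ (-((b^2 - a^2) ^ 2) * r ^ 2 = 2 * (a^2 + b^2) * (r ^ (2*ρ) + r ^ (2*θ)) ^ 2) :=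
  stmt1_general a b ρ θ hab r hr
end

section
/- For every r > 0, no eigenvalue of B(r) lies on the imaginary axis: every root λ ∈ ℂ of the characteristic polynomial of B(r) satisfies Re λ ≠ 0. -/
/-!
Reordering the basis as `(e₁, e₃), (e₂, e₄)` makes `B(r)` block diagonal with blocks
`[[s - i r b, s], [s, s + i r b]]` and the same with `a`, where `s = (r^{2ρ} + r^{2θ})/2`.
Hence its characteristic polynomial is `(λ² - 2sλ + r²b²)(λ² - 2sλ + r²a²)`. A purely imaginary
root `λ = iy` of `λ² - 2sλ + c²` would give `sy = 0` and `y² = c²`, impossible when `s, c ≠ 0`.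
-/

noncomputable section

open Polynomial Matrix

theorem det_fin_four_interleaved {R : Type*} [CommRing R] (p q u v w x y z : R) :
    !![p, 0, q, 0; 0, u, 0, v; w, 0, x, 0; 0, y, 0, z].det = (p * x - q * w) * (u * z - v * y) := by
  simp [det_succ_row_zero, Fin.sum_univ_succ, Fin.succAbove]
  ring

theorem charpoly_smul_B0_add_smul_B1 (a b : ℝ) (s t : ℂ) :
    (s • B0 + (Complex.I * t) • B1 a b).charpoly =
      (X ^ 2 - C (2 * s) * X + C ((t * b) ^ 2)) * (X ^ 2 - C (2 * s) * X + C ((t * a) ^ 2)) := by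
  have hchar : charmatrix (s • B0 + (Complex.I * t) • B1 a b) =
      !![X - C (s - Complex.I * t * b), 0, -C s, 0;
         0, X - C (s - Complex.I * t * a), 0, -C s;
         -C s, 0, X - C (s + Complex.I * t * b), 0;
         0, -C s, 0, X - C (s + Complex.I * t * a)] := by
    ext i j
    fin_cases i <;> fin_cases j <;> simp [B0, B1] <;> ring
  have hI : (C Complex.I) ^ 2 = -1 := by rw [← map_pow, Complex.I_sq, map_neg, map_one]
  rw [charpoly, hchar, det_fin_four_interleaved]
  simp only [map_sub, map_add, map_mul, map_pow, map_ofNat]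
  -- the two sides differ by a multiple of `C I ^ 2 + 1`
  linear_combination C t ^ 2 * (-(C (a : ℂ) ^ 2 + C (b : ℂ) ^ 2) * (X ^ 2 - 2 * C s * X) +
    C (a : ℂ) ^ 2 * C (b : ℂ) ^ 2 * C t ^ 2 * (C Complex.I ^ 2 - 1)) * hI

theorem re_ne_zero_of_isRoot_quadratic {s c : ℝ} (hs : s ≠ 0) (hc : c ≠ 0) {z : ℂ}
    (hz : (X ^ 2 - C (2 * (s : ℂ)) * X + C ((c : ℂ) ^ 2)).IsRoot z) : z.re ≠ 0 := by
  intro hre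
  have him : z.im = 0 := by
    simpa [pow_two, hre, hs] using congrArg Complex.im hz
  simpa [pow_two, hre, him, hc] using congrArg Complex.re hz

theorem stmt2_general (a b ρ θ : ℝ) (ha : 0 < a) (hab : a < b)
    (r : ℝ) (hr : 0 < r) (lam : ℂ)
    (hroot : (Bmat a b ρ θ r).charpoly.IsRoot lam) :
    lam.re ≠ 0 := by
  have hb : 0 < b := ha.trans hab
  have hs : (1 / 2) * (r ^ (2 * ρ) + r ^ (2 * θ)) ≠ 0 := by positivity
  rw [Bmat, charpoly_smul_B0_add_smul_B1, root_mul, ← Complex.ofReal_mul,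
    ← Complex.ofReal_mul] at hroot
  rcases hroot with hroot | hroot <;>
    exact re_ne_zero_of_isRoot_quadratic hs (by positivity) hroot

/-- For every `r > 0`, no eigenvalue of `B(r)` lies on the imaginary axis: every root of the
characteristic polynomial of `B(r)` has nonzero real part. -/
theorem stmt2 (a b ρ θ : ℝ) (ha : 0 < a) (hab : a < b)
    (hρ0 : 0 ≤ ρ) (hρ : ρ < 1/2) (hθ : 1/2 < θ) (hθ1 : θ ≤ 1)
    (r : ℝ) (hr : 0 < r) (lam : ℂ)
    (hroot : (Bmat a b ρ θ r).charpoly.IsRoot lam) :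
    lam.re ≠ 0 :=
  stmt2_general a b ρ θ ha hab r hr lam hroot
end
end

section
/- (Small-frequency eigenvalue asymptotics, case ρ+θ < 1) Assume additionally ρ + θ < 1. Then there exist ε ∈ (0,1) and functions λ₁, λ₂, λ₃, λ₄ : (0,ε) → ℂ such that for every r ∈ (0,ε) the multiset of roots (with multiplicity) of the characteristic polynomial of B(r) is {λ₁(r), λ₂(r), λ₃(r), λ₄(r)}, and as r → 0⁺: λ₁(r) − b²r^{2−2ρ} = O(r^{1+2θ−2ρ}), λ₂(r) − a²r^{2−2ρ} = O(r^{1+2θ−2ρ}), λ₃(r) − (r^{2ρ} + r^{2θ} − b²r^{2−2ρ}) = O(r^{1+2θ−2ρ}), and λ₄(r) − (r^{2ρ} + r^{2θ} − a²r^{2−2ρ}) = O(r^{1+2θ−2ρ}). -/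
noncomputable section

open Asymptotics Filter Topology Polynomial

/-!
With `s = (r^{2ρ} + r^{2θ})/2`, the matrix `B(r)` couples only the coordinates `{1, 3}` and
`{2, 4}`, so its characteristic polynomial is `(X² - 2sX + b²r²)(X² - 2sX + a²r²)`.
Since `r^{1-2ρ} → 0`, eventually `|c| r ≤ s`, so the roots `s ∓ √(s² - c²r²)` are real.
The small root `f` satisfies `f r^{2ρ} - c²r² = f (f - r^{2θ})` and `0 ≤ f ≤ 2c²r^{2-2ρ}`,
so `f - c²r^{2-2ρ} = O(r^{4-6ρ} + r^{2+2θ-4ρ}) = O(r^{1+2θ-2ρ})`, using `2ρ < 1` and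
`ρ + θ < 1`. The large root is `2s - f`.
-/

lemma isBigO_ofReal_left {α F : Type*} [Norm F] {l : Filter α} {f : α → ℝ} {g : α → F} :
    (fun x => (f x : ℂ)) =O[l] g ↔ f =O[l] g := by
  rw [← isBigO_norm_left]
  simp only [Complex.norm_real]
  exact isBigO_norm_left

lemma charpoly_of_two_by_two_blocks {R : Type*} [CommRing R] (s u α β : R) :
    (!![s - u*α, 0, s, 0; 0, s - u*β, 0, s; s, 0, s + u*α, 0; 0, s, 0, s + u*β]).charpoly
      = (X ^ 2 - 2 * C s * X - C (u ^ 2 * α ^ 2))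
        * (X ^ 2 - 2 * C s * X - C (u ^ 2 * β ^ 2)) := by
  rw [Matrix.charpoly, Matrix.det_succ_row_zero]
  simp [Fin.sum_univ_succ, Matrix.det_succ_row_zero, Fin.succAbove]
  ring

def lowerRoot (s p : ℝ) : ℝ := s - √(s ^ 2 - p)

def upperRoot (s p : ℝ) : ℝ := s + √(s ^ 2 - p)

lemma upperRoot_eq_two_mul_sub_lowerRoot (s p : ℝ) : upperRoot s p = 2 * s - lowerRoot s p := by
  rw [upperRoot, lowerRoot]; ring

lemma quadratic_eq_mul_lowerRoot_upperRoot {s p : ℝ} (h : p ≤ s ^ 2) :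
    (X ^ 2 - 2 * C (s : ℂ) * X + C (p : ℂ) : ℂ[X])
      = (X - C (lowerRoot s p : ℂ)) * (X - C (upperRoot s p : ℂ)) := by
  have hq : ((√(s ^ 2 - p) : ℝ) : ℂ) ^ 2 = s ^ 2 - p := by
    exact_mod_cast Real.sq_sqrt (sub_nonneg.2 h)
  have hp : (p : ℂ) = lowerRoot s p * upperRoot s p := by
    rw [lowerRoot, upperRoot]; push_cast; linear_combination hq
  rw [hp, upperRoot_eq_two_mul_sub_lowerRoot]
  simp only [map_mul, map_sub, Complex.ofReal_sub, Complex.ofReal_mul, Complex.ofReal_ofNat,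
    map_ofNat]
  ring

lemma abs_lowerRoot_sub_div_le {s p x y : ℝ} (hx : 0 < x) (hy : 0 < y) (hs : x + y = 2 * s)
    (hp : 0 ≤ p) (hps : p ≤ s ^ 2) :
    |lowerRoot s p - p / x| ≤ 2 * (p / x) * (2 * (p / x) + y) / x := by
  set q := √(s ^ 2 - p)
  have hq2 : q ^ 2 = s ^ 2 - p := Real.sq_sqrt (sub_nonneg.2 hps)
  have hq0 : 0 ≤ q := Real.sqrt_nonneg _
  have hqs : q ≤ s := by nlinarith
  set f := lowerRoot s p
  have hf : f = s - q := rfl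
  have hf0 : 0 ≤ f := by linarith
  have hvieta : f * (x + y - f) = p := by rw [hf, hs]; linear_combination -hq2
  have hfx : f ≤ 2 * (p / x) := by
    have : x / 2 ≤ x + y - f := by linarith
    rw [mul_div_assoc', le_div_iff₀ hx]
    nlinarith [mul_le_mul_of_nonneg_left this hf0]
  have hkey : (f - p / x) * x = f * (f - y) := by
    field_simp; linear_combination hvieta
  have habs : |f - p / x| = f * |f - y| / x := by
    rw [eq_div_iff hx.ne']
    calc |f - p / x| * x = |(f - p / x) * x| := by rw [abs_mul, abs_of_pos hx]
      _ = f * |f - y| := by rw [hkey, abs_mul, abs_of_nonneg hf0]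
  rw [habs]
  have : |f - y| ≤ f + y := (abs_sub _ _).trans (by rw [abs_of_nonneg hf0, abs_of_pos hy])
  gcongr
  linarith

def b0Coeff (ρ θ r : ℝ) : ℝ := 1/2 * (r ^ (2*ρ) + r ^ (2*θ))

lemma Bmat_eq_blocks (a b ρ θ r : ℝ) :
    Bmat a b ρ θ r = let s : ℂ := b0Coeff ρ θ r; let u : ℂ := Complex.I * r
      !![s - u*b, 0, s, 0; 0, s - u*a, 0, s; s, 0, s + u*b, 0; 0, s, 0, s + u*a] := by
  ext i j
  fin_cases i <;> fin_cases j <;> simp [Bmat, B0, B1, b0Coeff] <;> ring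

lemma charpoly_Bmat (a b ρ θ r : ℝ) :
    (Bmat a b ρ θ r).charpoly
      = (X ^ 2 - 2 * C (b0Coeff ρ θ r : ℂ) * X + C ((b ^ 2 * r ^ 2 : ℝ) : ℂ))
        * (X ^ 2 - 2 * C (b0Coeff ρ θ r : ℂ) * X + C ((a ^ 2 * r ^ 2 : ℝ) : ℂ)) := by
  have hI (c : ℝ) :
      C ((Complex.I * r) ^ 2 * (c : ℂ) ^ 2) = - C ((c ^ 2 * r ^ 2 : ℝ) : ℂ) := by
    rw [← map_neg]; congr 1; push_cast; linear_combination ((r : ℂ) ^ 2 * c ^ 2) * Complex.I_sq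
  rw [Bmat_eq_blocks, charpoly_of_two_by_two_blocks, hI, hI, sub_neg_eq_add, sub_neg_eq_add]

lemma roots_charpoly_Bmat {a b ρ θ r : ℝ} (ha : a ^ 2 * r ^ 2 ≤ b0Coeff ρ θ r ^ 2)
    (hb : b ^ 2 * r ^ 2 ≤ b0Coeff ρ θ r ^ 2) :
    (Bmat a b ρ θ r).charpoly.roots =
      {(lowerRoot (b0Coeff ρ θ r) (b ^ 2 * r ^ 2) : ℂ),
        (lowerRoot (b0Coeff ρ θ r) (a ^ 2 * r ^ 2) : ℂ),
        (upperRoot (b0Coeff ρ θ r) (b ^ 2 * r ^ 2) : ℂ),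
        (upperRoot (b0Coeff ρ θ r) (a ^ 2 * r ^ 2) : ℂ)} := by
  rw [charpoly_Bmat, quadratic_eq_mul_lowerRoot_upperRoot ha,
    quadratic_eq_mul_lowerRoot_upperRoot hb]
  refine (congrArg roots ?_).trans (roots_multiset_prod_X_sub_C _)
  simp only [Multiset.insert_eq_cons, Multiset.map_cons, Multiset.map_singleton,
    Multiset.prod_cons, Multiset.prod_singleton]
  ring

lemma eventually_sq_mul_sq_le_b0Coeff_sq {ρ : ℝ} (hρ : ρ < 1/2) (θ c : ℝ) :
    ∀ᶠ r in 𝓝[>] 0, c ^ 2 * r ^ 2 ≤ b0Coeff ρ θ r ^ 2 := by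
  have hlim : Tendsto (fun r : ℝ => 2 * |c| * r ^ (1 - 2*ρ)) (𝓝[>] 0) (𝓝 0) := by
    have := ((Real.continuous_rpow_const (by linarith : (0:ℝ) ≤ 1 - 2*ρ)).tendsto 0).const_mul
      (2 * |c|)
    rw [Real.zero_rpow (by linarith), mul_zero] at this
    exact this.mono_left nhdsWithin_le_nhds
  filter_upwards [hlim.eventually (ge_mem_nhds one_pos), self_mem_nhdsWithin]
    with r hsmall (hr : 0 < r)
  have hsplit : r = r ^ (1 - 2*ρ) * r ^ (2*ρ) := by
    rw [← Real.rpow_add hr, sub_add_cancel, Real.rpow_one]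
  have hcr : |c| * r ≤ b0Coeff ρ θ r := by
    have hx := Real.rpow_pos_of_pos hr (2*ρ)
    have hy := Real.rpow_pos_of_pos hr (2*θ)
    rw [b0Coeff]
    nth_rewrite 1 [hsplit]
    nlinarith
  rw [← mul_pow, ← sq_abs (c * r), abs_mul, abs_of_pos hr]
  exact pow_le_pow_left₀ (by positivity) hcr 2

lemma isBigO_lowerRoot_sub {ρ θ : ℝ} (hρ : ρ < 1/2) (hsum : ρ + θ < 1) (c : ℝ) :
    (fun r => lowerRoot (b0Coeff ρ θ r) (c ^ 2 * r ^ 2) - c ^ 2 * r ^ (2 - 2*ρ))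
      =O[𝓝[>] 0] fun r => r ^ (1 + 2*θ - 2*ρ) := by
  refine IsBigO.of_bound (4 * c ^ 4 + 2 * c ^ 2) ?_
  filter_upwards [eventually_sq_mul_sq_le_b0Coeff_sq hρ θ c, Ioo_mem_nhdsGT one_pos]
    with r hc ⟨hr, hr1⟩
  have hx := Real.rpow_pos_of_pos hr (2*ρ)
  have hy := Real.rpow_pos_of_pos hr (2*θ)
  have hdiv : c ^ 2 * r ^ 2 / r ^ (2*ρ) = c ^ 2 * r ^ (2 - 2*ρ) := by
    rw [Real.rpow_sub hr, Real.rpow_two, mul_div_assoc]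
  have hle (e : ℝ) (he : 1 + 2*θ - 2*ρ ≤ e) : r ^ e ≤ r ^ (1 + 2*θ - 2*ρ) :=
    Real.rpow_le_rpow_of_exponent_ge hr hr1.le he
  have h₁ : r ^ (2 - 2*ρ) * r ^ (2 - 2*ρ) / r ^ (2*ρ) ≤ r ^ (1 + 2*θ - 2*ρ) := by
    rw [← Real.rpow_add hr, ← Real.rpow_sub hr]; exact hle _ (by linarith)
  have h₂ : r ^ (2 - 2*ρ) * r ^ (2*θ) / r ^ (2*ρ) ≤ r ^ (1 + 2*θ - 2*ρ) := by
    rw [← Real.rpow_add hr, ← Real.rpow_sub hr]; exact hle _ (by linarith)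
  have hbound := abs_lowerRoot_sub_div_le hx hy (by rw [b0Coeff]; ring) (by positivity) hc
  rw [hdiv] at hbound
  rw [Real.norm_eq_abs, Real.norm_eq_abs, abs_of_pos (Real.rpow_pos_of_pos hr _)]
  calc _ ≤ _ := hbound
    _ = 4 * c ^ 4 * (r ^ (2 - 2*ρ) * r ^ (2 - 2*ρ) / r ^ (2*ρ))
          + 2 * c ^ 2 * (r ^ (2 - 2*ρ) * r ^ (2*θ) / r ^ (2*ρ)) := by ring
    _ ≤ (4 * c ^ 4 + 2 * c ^ 2) * r ^ (1 + 2*θ - 2*ρ) := by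
      rw [add_mul]; gcongr

lemma isBigO_upperRoot_sub {ρ θ : ℝ} (hρ : ρ < 1/2) (hsum : ρ + θ < 1) (c : ℝ) :
    (fun r => upperRoot (b0Coeff ρ θ r) (c ^ 2 * r ^ 2)
        - (r ^ (2*ρ) + r ^ (2*θ) - c ^ 2 * r ^ (2 - 2*ρ)))
      =O[𝓝[>] 0] fun r => r ^ (1 + 2*θ - 2*ρ) :=
  (isBigO_lowerRoot_sub hρ hsum c).neg_left.congr_left fun r => by
    rw [upperRoot_eq_two_mul_sub_lowerRoot, b0Coeff]; ring

theorem stmt4_general (a b ρ θ : ℝ) (hρ : ρ < 1/2) (hsum : ρ + θ < 1) :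
    ∃ ε : ℝ, 0 < ε ∧ ε < 1 ∧ ∃ l₁ l₂ l₃ l₄ : ℝ → ℂ,
      (∀ r : ℝ, 0 < r → r < ε →
        (Bmat a b ρ θ r).charpoly.roots = {l₁ r, l₂ r, l₃ r, l₄ r}) ∧
      (fun r : ℝ => l₁ r - ((b^2 * r ^ (2 - 2*ρ) : ℝ) : ℂ))
        =O[𝓝[>] (0:ℝ)] (fun r : ℝ => r ^ (1 + 2*θ - 2*ρ)) ∧
      (fun r : ℝ => l₂ r - ((a^2 * r ^ (2 - 2*ρ) : ℝ) : ℂ))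
        =O[𝓝[>] (0:ℝ)] (fun r : ℝ => r ^ (1 + 2*θ - 2*ρ)) ∧
      (fun r : ℝ => l₃ r - ((r ^ (2*ρ) + r ^ (2*θ) - b^2 * r ^ (2 - 2*ρ) : ℝ) : ℂ))
        =O[𝓝[>] (0:ℝ)] (fun r : ℝ => r ^ (1 + 2*θ - 2*ρ)) ∧
      (fun r : ℝ => l₄ r - ((r ^ (2*ρ) + r ^ (2*θ) - a^2 * r ^ (2 - 2*ρ) : ℝ) : ℂ))
        =O[𝓝[>] (0:ℝ)] (fun r : ℝ => r ^ (1 + 2*θ - 2*ρ)) := by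
  obtain ⟨u, hu, hreal⟩ := mem_nhdsGT_iff_exists_Ioo_subset.1 <|
    (eventually_sq_mul_sq_le_b0Coeff_sq hρ θ a).and (eventually_sq_mul_sq_le_b0Coeff_sq hρ θ b)
  refine ⟨min u (1/2), lt_min hu (by norm_num), (min_le_right _ _).trans_lt (by norm_num),
    fun r => lowerRoot (b0Coeff ρ θ r) (b ^ 2 * r ^ 2),
    fun r => lowerRoot (b0Coeff ρ θ r) (a ^ 2 * r ^ 2),
    fun r => upperRoot (b0Coeff ρ θ r) (b ^ 2 * r ^ 2),
    fun r => upperRoot (b0Coeff ρ θ r) (a ^ 2 * r ^ 2),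
    fun r hr hrε => ?_, ?_⟩
  · obtain ⟨ha, hb⟩ := hreal ⟨hr, hrε.trans_le (min_le_left _ _)⟩
    exact roots_charpoly_Bmat ha hb
  · simp only [← Complex.ofReal_sub, isBigO_ofReal_left]
    exact ⟨isBigO_lowerRoot_sub hρ hsum b, isBigO_lowerRoot_sub hρ hsum a,
      isBigO_upperRoot_sub hρ hsum b, isBigO_upperRoot_sub hρ hsum a⟩

/-- Small-frequency eigenvalue asymptotics in the case `ρ + θ < 1`. -/
theorem stmt4 (a b ρ θ : ℝ) (ha : 0 < a) (hab : a < b)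
    (hρ0 : 0 ≤ ρ) (hρ : ρ < 1/2) (hθ : 1/2 < θ) (hθ1 : θ ≤ 1)
    (hsum : ρ + θ < 1) :
    ∃ ε : ℝ, 0 < ε ∧ ε < 1 ∧ ∃ l₁ l₂ l₃ l₄ : ℝ → ℂ,
      (∀ r : ℝ, 0 < r → r < ε →
        (Bmat a b ρ θ r).charpoly.roots = {l₁ r, l₂ r, l₃ r, l₄ r}) ∧
      (fun r : ℝ => l₁ r - ((b^2 * r ^ (2 - 2*ρ) : ℝ) : ℂ))
        =O[𝓝[>] (0:ℝ)] (fun r : ℝ => r ^ (1 + 2*θ - 2*ρ)) ∧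
      (fun r : ℝ => l₂ r - ((a^2 * r ^ (2 - 2*ρ) : ℝ) : ℂ))
        =O[𝓝[>] (0:ℝ)] (fun r : ℝ => r ^ (1 + 2*θ - 2*ρ)) ∧
      (fun r : ℝ => l₃ r - ((r ^ (2*ρ) + r ^ (2*θ) - b^2 * r ^ (2 - 2*ρ) : ℝ) : ℂ))
        =O[𝓝[>] (0:ℝ)] (fun r : ℝ => r ^ (1 + 2*θ - 2*ρ)) ∧
      (fun r : ℝ => l₄ r - ((r ^ (2*ρ) + r ^ (2*θ) - a^2 * r ^ (2 - 2*ρ) : ℝ) : ℂ))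
        =O[𝓝[>] (0:ℝ)] (fun r : ℝ => r ^ (1 + 2*θ - 2*ρ)) :=
  stmt4_general a b ρ θ hρ hsum
end
end

section
/- (Sharp pointwise estimate) There exist constants C > 0 and c > 0 such that for every r > 0, every t ≥ 0 and every v ∈ ℂ⁴, ‖exp(−t B(r)) v‖ ≤ C exp(−c t · r^{2−2ρ}/(1 + r^{2θ−2ρ})) ‖v‖, where exp denotes the matrix exponential and ‖·‖ the Euclidean norm on ℂ⁴. -/
/-!
`B(r)` only couples the coordinates `0, 2` and `1, 3` of `ℂ⁴`. On such a pair `(u, w)` it acts with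
damping `α = (r^{2ρ} + r^{2θ})/2` and frequency `k = r b` resp. `r a`, and in the variables
`p = u + w`, `q = u - w` the flow `W' = -B W` reads `p' = -2αp + ikq`, `q' = ikp`: only `p` is
damped. A Lyapunov functional equivalent to `‖p‖² + ‖q‖²` decays at the rate
`αk²/(3(2α² + k²))`, and since `r ≤ r^{2ρ} + r^{2θ} = 2α` this rate dominates a fixed multiple
of `r²/(2α) = η(r)`.
-/

noncomputable section

/-- The Euclidean norm on `ℂ⁴`. -/
def euclNorm (v : Fin 4 → ℂ) : ℝ := Real.sqrt (∑ i, ‖v i‖ ^ 2)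

open Real
open Complex (I)
open scoped InnerProductSpace

theorem le_mul_exp_of_hasDerivAt_le_neg_mul {E E' : ℝ → ℝ} {γ t : ℝ}
    (hE : ∀ τ, HasDerivAt E (E' τ) τ) (hE' : ∀ τ, E' τ ≤ -γ * E τ) (ht : 0 ≤ t) :
    E t ≤ E 0 * exp (-γ * t) := by
  have h := le_gronwallBound_of_liminf_deriv_right_le (f' := E') (K := -γ) (ε := 0)
    (fun τ _ => (hE τ).continuousAt.continuousWithinAt)
    (fun τ _ _ hr => (hE τ).hasDerivWithinAt.liminf_right_slope_le hr) le_rfl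
    (fun τ _ => by simpa using hE' τ) t ⟨ht, le_rfl⟩
  rwa [gronwallBound_ε0, sub_zero] at h

section DampedPair

variable {α k : ℝ}

def pairRate (α k : ℝ) : ℝ := α * k ^ 2 / (3 * (2 * α ^ 2 + k ^ 2))

/- `‖p‖² + ‖q‖²` is dissipated only through `p`; the cross term, whose derivative contains
`k ‖p‖² - k ‖q‖²`, passes the damping on to `q`. -/
def pairLyapunov (α k : ℝ) (p q : ℂ) : ℝ :=
  ‖p‖ ^ 2 + ‖q‖ ^ 2 + α * k / (2 * α ^ 2 + k ^ 2) * ⟪I * p, q⟫_ℝ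

theorem pairLyapunov_bounds (hα : 0 < α) (hk : 0 < k) (p q : ℂ) :
    (‖p‖ ^ 2 + ‖q‖ ^ 2) / 2 ≤ pairLyapunov α k p q ∧
      pairLyapunov α k p q ≤ 3 / 2 * (‖p‖ ^ 2 + ‖q‖ ^ 2) := by
  have hs : |α * k / (2 * α ^ 2 + k ^ 2)| ≤ 1 := by
    rw [abs_le, div_le_one (by positivity), le_div_iff₀ (by positivity)]
    constructor <;> nlinarith [sq_nonneg (α - k), mul_pos hα hk]
  have hcs : |α * k / (2 * α ^ 2 + k ^ 2) * ⟪I * p, q⟫_ℝ| ≤ (‖p‖ ^ 2 + ‖q‖ ^ 2) / 2 := by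
    have := abs_real_inner_le_norm (I * p) q
    rw [norm_mul, Complex.norm_I, one_mul] at this
    rw [abs_mul]
    nlinarith [two_mul_le_add_sq ‖p‖ ‖q‖, abs_nonneg ⟪I * p, q⟫_ℝ,
      abs_nonneg (α * k / (2 * α ^ 2 + k ^ 2))]
  unfold pairLyapunov
  constructor <;> linarith [abs_le.1 hcs]

theorem pairLyapunov_deriv_le (hα : 0 < α) (hk : 0 < k) (p q : ℂ) :
    2 * ⟪p, -2 * α * p + I * k * q⟫_ℝ + 2 * ⟪q, I * k * p⟫_ℝ +
        α * k / (2 * α ^ 2 + k ^ 2) * (⟪I * p, I * k * p⟫_ℝ + ⟪I * (-2 * α * p + I * k * q), q⟫_ℝ)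
      ≤ -(3 / 2 * pairRate α k) * (‖p‖ ^ 2 + ‖q‖ ^ 2) := by
  simp only [Complex.inner, pairRate, Complex.sq_norm, Complex.normSq_apply, Complex.mul_re,
    Complex.mul_im, Complex.add_re, Complex.add_im, Complex.conj_re, Complex.conj_im, Complex.I_re,
    Complex.I_im, Complex.ofReal_re, Complex.ofReal_im, Complex.neg_re, Complex.neg_im,
    Complex.re_ofNat, Complex.im_ofNat]
  have key : 0 ≤ 16 * α ^ 2 * (p.re ^ 2 + p.im ^ 2) + 5 * k ^ 2 * (p.re ^ 2 + p.im ^ 2)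
      + k ^ 2 * (q.re ^ 2 + q.im ^ 2) + 4 * α * k * (p.re * q.im - p.im * q.re) := by
    nlinarith [sq_nonneg (2 * α * p.re + k * q.im), sq_nonneg (2 * α * p.im - k * q.re),
      sq_nonneg p.re, sq_nonneg p.im]
  rw [← sub_nonneg]
  calc (0 : ℝ) ≤ α * _ / (2 * (2 * α ^ 2 + k ^ 2)) :=
        div_nonneg (mul_nonneg hα.le key) (by positivity)
    _ = _ := by field_simp; ring

theorem pair_decay (hα : 0 < α) (hk : 0 < k) {p q : ℝ → ℂ}
    (hp : ∀ τ, HasDerivAt p (-2 * α * p τ + I * k * q τ) τ) (hq : ∀ τ, HasDerivAt q (I * k * p τ) τ)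
    {t : ℝ} (ht : 0 ≤ t) :
    ‖p t‖ ^ 2 + ‖q t‖ ^ 2 ≤ 3 * exp (-pairRate α k * t) * (‖p 0‖ ^ 2 + ‖q 0‖ ^ 2) := by
  have hR : 0 ≤ pairRate α k := by unfold pairRate; positivity
  have hV := fun τ => (((hp τ).norm_sq.add (hq τ).norm_sq).add
    ((((hp τ).const_mul I).inner ℝ (hq τ)).const_mul (α * k / (2 * α ^ 2 + k ^ 2))))
  have hdecay := le_mul_exp_of_hasDerivAt_le_neg_mul
    (E := fun τ => pairLyapunov α k (p τ) (q τ)) (γ := pairRate α k) hV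
    (fun τ => by
      have := mul_le_mul_of_nonneg_left (pairLyapunov_bounds hα hk (p τ) (q τ)).2 hR
      linarith [pairLyapunov_deriv_le hα hk (p τ) (q τ)])
    ht
  calc ‖p t‖ ^ 2 + ‖q t‖ ^ 2 ≤ 2 * pairLyapunov α k (p t) (q t) := by
        linarith [(pairLyapunov_bounds hα hk (p t) (q t)).1]
    _ ≤ 2 * (pairLyapunov α k (p 0) (q 0) * exp (-pairRate α k * t)) := by gcongr
    _ ≤ 2 * (3 / 2 * (‖p 0‖ ^ 2 + ‖q 0‖ ^ 2) * exp (-pairRate α k * t)) := by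
        gcongr; exact (pairLyapunov_bounds hα hk (p 0) (q 0)).2
    _ = 3 * exp (-pairRate α k * t) * (‖p 0‖ ^ 2 + ‖q 0‖ ^ 2) := by ring

theorem pairRate_le_pairRate (hα : 0 < α) {l : ℝ} (hk : 0 ≤ k) (hkl : k ≤ l) :
    pairRate α k ≤ pairRate α l := by
  unfold pairRate
  rw [div_le_div_iff₀ (by positivity) (by positivity)]
  have : k ^ 2 ≤ l ^ 2 := pow_le_pow_left₀ hk hkl 2
  nlinarith [mul_le_mul_of_nonneg_left this (by positivity : 0 ≤ 6 * α ^ 3)]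

theorem block_decay (hα : 0 < α) (hk : 0 < k) {u w : ℝ → ℂ}
    (hu : ∀ τ, HasDerivAt u (-(α * (u τ + w τ) - I * k * u τ)) τ)
    (hw : ∀ τ, HasDerivAt w (-(α * (u τ + w τ) + I * k * w τ)) τ) {t : ℝ} (ht : 0 ≤ t) :
    ‖u t‖ ^ 2 + ‖w t‖ ^ 2 ≤ 3 * exp (-pairRate α k * t) * (‖u 0‖ ^ 2 + ‖w 0‖ ^ 2) := by
  have h := pair_decay hα hk (p := u + w) (q := u - w)
    (fun τ => ((hu τ).add (hw τ)).congr_deriv (by simp only [Pi.add_apply, Pi.sub_apply]; ring))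
    (fun τ => ((hu τ).sub (hw τ)).congr_deriv (by simp only [Pi.add_apply]; ring)) ht
  simp only [Pi.add_apply, Pi.sub_apply, parallelogram_law_with_norm ℝ] at h
  linarith

end DampedPair

theorem le_rpow_add_rpow {r x y : ℝ} (hr : 0 < r) (hx : x ≤ 1) (hy : 1 ≤ y) :
    r ≤ r ^ x + r ^ y := by
  rcases le_total r 1 with h | h
  · have := rpow_le_rpow_of_exponent_ge hr h hx
    rw [rpow_one] at this
    linarith [rpow_pos_of_pos hr y]
  · have := rpow_le_rpow_of_exponent_le h hy
    rw [rpow_one] at this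
    linarith [rpow_pos_of_pos hr x]

theorem rpow_sub_div_one_add_rpow_sub {r : ℝ} (hr : 0 < r) (ρ θ : ℝ) :
    r ^ (2 - 2 * ρ) / (1 + r ^ (2 * θ - 2 * ρ)) = r ^ 2 / (r ^ (2 * ρ) + r ^ (2 * θ)) := by
  have := rpow_pos_of_pos hr (2 * ρ)
  rw [rpow_sub hr, rpow_sub hr, rpow_two]
  field_simp

theorem div_mul_le_pairRate {a α r : ℝ} (ha : 0 < a) (hα : 0 < α) (hr : 0 < r) (hrα : r ≤ 2 * α) :
    a ^ 2 / (3 * (1 + 2 * a ^ 2)) * (r ^ 2 / (2 * α)) ≤ pairRate α (r * a) := by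
  unfold pairRate
  rw [div_mul_div_comm, div_le_div_iff₀ (by positivity) (by positivity)]
  have : r ^ 2 ≤ (2 * α) ^ 2 := pow_le_pow_left₀ hr.le hrα 2
  nlinarith [mul_le_mul_of_nonneg_left this (by positivity : 0 ≤ 3 * a ^ 4 * r ^ 2)]

theorem euclNorm_le_of_sum_sq_le {x v : Fin 4 → ℂ} {y : ℝ}
    (h : ∑ i, ‖x i‖ ^ 2 ≤ 3 * exp (2 * y) * ∑ i, ‖v i‖ ^ 2) :
    euclNorm x ≤ 2 * exp y * euclNorm v := by
  unfold euclNorm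
  calc √(∑ i, ‖x i‖ ^ 2) ≤ √((2 * exp y) ^ 2 * ∑ i, ‖v i‖ ^ 2) := by
        refine sqrt_le_sqrt (h.trans ?_)
        rw [mul_pow, ← exp_nat_mul, Nat.cast_ofNat]
        gcongr
        norm_num
    _ = 2 * exp y * √(∑ i, ‖v i‖ ^ 2) := by
        rw [sqrt_mul (sq_nonneg _), sqrt_sq (by positivity)]

section Matrix

open Matrix

theorem hasDerivAt_exp_neg_smul_mulVec {n : Type*} [Fintype n] [DecidableEq n] (A : Matrix n n ℂ)
    (v : n → ℂ) (t : ℝ) :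
    HasDerivAt (fun s : ℝ => NormedSpace.exp (-(s : ℂ) • A) *ᵥ v)
      (-(A *ᵥ (NormedSpace.exp (-(t : ℂ) • A) *ᵥ v))) t := by
  let _ : NormedRing (Matrix n n ℂ) := Matrix.linftyOpNormedRing
  let _ : NormedAlgebra ℝ (Matrix n n ℂ) := Matrix.linftyOpNormedAlgebra
  let L : Matrix n n ℂ →L[ℝ] (n → ℂ) := LinearMap.toContinuousLinearMap ((mulVecBilin ℝ ℂ).flip v)
  have h := L.hasFDerivAt.comp_hasDerivAt t (hasDerivAt_exp_smul_const' (-A) t)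
  simp only [Function.comp_def, smul_neg, ← Complex.coe_smul, ← neg_smul] at h
  refine h.congr_deriv ?_
  change (-A * _) *ᵥ v = _
  rw [← mulVec_mulVec, neg_mulVec]
  rfl

theorem smul_B0_add_smul_B1_mulVec (α r a b : ℝ) (x : Fin 4 → ℂ) :
    ((α : ℂ) • B0 + (I * r) • B1 a b) *ᵥ x =
      ![α * (x 0 + x 2) - I * ↑(r * b) * x 0, α * (x 1 + x 3) - I * ↑(r * a) * x 1,
        α * (x 0 + x 2) + I * ↑(r * b) * x 2, α * (x 1 + x 3) + I * ↑(r * a) * x 3] := by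
  ext i
  fin_cases i <;> simp [B0, B1, mulVec, dotProduct, Fin.sum_univ_four] <;> ring

theorem sum_norm_sq_le_of_hasDerivAt {α r a b : ℝ} (hα : 0 < α) (hr : 0 < r) (ha : 0 < a)
    (hab : a ≤ b) {f : ℝ → Fin 4 → ℂ}
    (hf : ∀ τ, HasDerivAt f (-(((α : ℂ) • B0 + (I * r) • B1 a b) *ᵥ f τ)) τ) {t : ℝ} (ht : 0 ≤ t) :
    ∑ i, ‖f t i‖ ^ 2 ≤ 3 * exp (-pairRate α (r * a) * t) * ∑ i, ‖f 0 i‖ ^ 2 := by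
  have hcomp (i : Fin 4) (τ : ℝ) := hasDerivAt_pi.1 (hf τ) i
  simp only [smul_B0_add_smul_B1_mulVec] at hcomp
  have hdecay_b := block_decay hα (mul_pos hr (ha.trans_le hab)) (hcomp 0) (hcomp 2) ht
  have hdecay_a := block_decay hα (mul_pos hr ha) (hcomp 1) (hcomp 3) ht
  have hrate : exp (-pairRate α (r * b) * t) ≤ exp (-pairRate α (r * a) * t) := by
    have := pairRate_le_pairRate hα (mul_pos hr ha).le (mul_le_mul_of_nonneg_left hab hr.le)
    exact exp_le_exp.2 (by nlinarith)
  have := mul_le_mul_of_nonneg_right hrate (by positivity : 0 ≤ 3 * (‖f 0 0‖ ^ 2 + ‖f 0 2‖ ^ 2))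
  simp only [Fin.sum_univ_four]
  linarith

end Matrix

theorem stmt10_general (a b ρ θ : ℝ) (ha : 0 < a) (hab : a < b)
    (hρ : ρ < 1/2) (hθ : 1/2 < θ) :
    ∃ C > (0:ℝ), ∃ c > (0:ℝ), ∀ r : ℝ, 0 < r → ∀ t : ℝ, 0 ≤ t → ∀ v : Fin 4 → ℂ,
      euclNorm ((NormedSpace.exp (-(t : ℂ) • Bmat a b ρ θ r)).mulVec v)
        ≤ C * Real.exp (-c * t * (r ^ (2 - 2*ρ) / (1 + r ^ (2*θ - 2*ρ)))) * euclNorm v := by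
  refine ⟨2, two_pos, a ^ 2 / (3 * (1 + 2 * a ^ 2)) / 2, by positivity, fun r hr t ht v => ?_⟩
  set α := 1 / 2 * (r ^ (2 * ρ) + r ^ (2 * θ)) with hα_def
  have hα : 0 < α := by positivity
  have hrα : r ≤ 2 * α := by
    linarith [le_rpow_add_rpow (x := 2 * ρ) (y := 2 * θ) hr (by linarith) (by linarith)]
  have hsum := sum_norm_sq_le_of_hasDerivAt hα hr ha hab.le
    (fun τ => hasDerivAt_exp_neg_smul_mulVec (Bmat a b ρ θ r) v τ) ht
  simp only [Complex.ofReal_zero, neg_zero, zero_smul, NormedSpace.exp_zero, Matrix.one_mulVec]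
    at hsum
  rw [rpow_sub_div_one_add_rpow_sub hr, show r ^ (2 * ρ) + r ^ (2 * θ) = 2 * α by rw [hα_def]; ring]
  refine euclNorm_le_of_sum_sq_le (hsum.trans ?_)
  have := mul_le_mul_of_nonneg_right (div_mul_le_pairRate ha hα hr hrα) ht
  gcongr 3 * exp ?_ * _
  linarith

/-- Sharp pointwise estimate: `‖exp(−tB(r))v‖ ≤ C e^{−c t η(r)} ‖v‖` with
`η(r) = r^{2−2ρ}/(1+r^{2θ−2ρ})`. -/
theorem stmt10 (a b ρ θ : ℝ) (ha : 0 < a) (hab : a < b)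
    (hρ0 : 0 ≤ ρ) (hρ : ρ < 1/2) (hθ : 1/2 < θ) (hθ1 : θ ≤ 1) :
    ∃ C > (0:ℝ), ∃ c > (0:ℝ), ∀ r : ℝ, 0 < r → ∀ t : ℝ, 0 ≤ t → ∀ v : Fin 4 → ℂ,
      euclNorm ((NormedSpace.exp (-(t : ℂ) • Bmat a b ρ θ r)).mulVec v)
        ≤ C * Real.exp (-c * t * (r ^ (2 - 2*ρ) / (1 + r ^ (2*θ - 2*ρ)))) * euclNorm v :=
  stmt10_general a b ρ θ ha hab hρ hθ

end
end

section
/- (Workhorse integral estimate) Let s ≥ 0, c > 0, ε > 0 and 0 ≤ ρ < 1/2. Then there exists a constant C > 0 such that for every t ≥ 0, ∫_{ξ ∈ ℝ², |ξ| < ε} |ξ|^{2s} e^{−2c|ξ|^{2−2ρ} t} dξ ≤ C (1+t)^{−(2s+2)/(2−2ρ)}, where the integral is with respect to two-dimensional Lebesgue measure. -/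
/-!
In polar coordinates the integral becomes `2π ∫₀^ε r^(2s+1) e^(-2c r^κ t) dr` with `κ = 2 - 2ρ`.
Since `r < ε`, half of the decay can be traded for the factor `1 + t` at a bounded cost:
`e^(-2c r^κ t) ≤ e^(c ε^κ) e^(-c (1+t) r^κ)`. Extending the integral to `(0, ∞)` and substituting
`u = c (1+t) r^κ` gives a Gamma integral, `∫₀^∞ r^q e^(-b r^κ) dr = b^(-(q+1)/κ) Γ((q+1)/κ) / κ`,
which is exactly the claimed power of `1 + t`.
-/

open MeasureTheory Real Set Metric

lemma exp_neg_two_mul_mul_le {c t x X : ℝ} (hc : 0 ≤ c) (ht : 0 ≤ t) (hx : 0 ≤ x) (hxX : x ≤ X) :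
    exp (-2 * c * x * t) ≤ exp (c * X) * exp (-(c * (1 + t)) * x) := by
  rw [← exp_add, exp_le_exp]
  nlinarith [mul_nonneg (mul_nonneg hc hx) ht, mul_le_mul_of_nonneg_left hxX hc]

lemma setIntegral_Ioo_rpow_mul_exp_le {p κ c t : ℝ} (ε : ℝ) (hp : -1 < p) (hκ : 0 < κ)
    (hc : 0 < c) (ht : 0 ≤ t) :
    ∫ y in Ioo 0 ε, y ^ p * exp (-2 * c * y ^ κ * t) ≤
      exp (c * ε ^ κ) * ((c * (1 + t)) ^ (-(p + 1) / κ) * (1 / κ) * Gamma ((p + 1) / κ)) := by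
  have hb : 0 < c * (1 + t) := by positivity
  have hint : IntegrableOn (fun y ↦ exp (c * ε ^ κ) * (y ^ p * exp (-(c * (1 + t)) * y ^ κ)))
      (Ioi 0) := (integrableOn_rpow_mul_exp_neg_mul_rpow hp hκ hb).const_mul _
  calc ∫ y in Ioo 0 ε, y ^ p * exp (-2 * c * y ^ κ * t)
      ≤ ∫ y in Ioo 0 ε, exp (c * ε ^ κ) * (y ^ p * exp (-(c * (1 + t)) * y ^ κ)) := by
        refine integral_mono_of_nonneg ?_ (hint.mono_set Ioo_subset_Ioi_self) ?_
        · filter_upwards [ae_restrict_mem measurableSet_Ioo] with y hy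
          have := hy.1.le
          positivity
        · filter_upwards [ae_restrict_mem measurableSet_Ioo] with y ⟨hy0, hyε⟩
          rw [mul_left_comm]
          gcongr
          exact exp_neg_two_mul_mul_le hc.le ht (by positivity) (by gcongr)
    _ ≤ ∫ y in Ioi 0, exp (c * ε ^ κ) * (y ^ p * exp (-(c * (1 + t)) * y ^ κ)) := by
        refine setIntegral_mono_set hint ?_ (Ioo_subset_Ioi_self.eventuallyLE)
        filter_upwards [ae_restrict_mem measurableSet_Ioi] with y (hy : 0 < y)
        positivity
    _ = _ := by rw [integral_const_mul, integral_rpow_mul_exp_neg_mul_rpow hκ hp hb]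

section Polar

variable {E F : Type*} [NormedAddCommGroup E] [NormedSpace ℝ E] [Nontrivial E]
  [FiniteDimensional ℝ E] [MeasurableSpace E] [BorelSpace E]
  [NormedAddCommGroup F] [NormedSpace ℝ F] (μ : Measure E) [μ.IsAddHaarMeasure]

lemma setIntegral_ball_fun_norm_addHaar (f : ℝ → F) (r : ℝ) :
    ∫ x in ball (0 : E) r, f ‖x‖ ∂μ = Module.finrank ℝ E • μ.real (ball 0 1) •
      ∫ y in Ioo 0 r, y ^ (Module.finrank ℝ E - 1) • f y := by
  calc ∫ x in ball (0 : E) r, f ‖x‖ ∂μ = ∫ x, (Iio r).indicator f ‖x‖ ∂μ := by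
        rw [← integral_indicator measurableSet_ball]
        congr 1 with x
        simp [indicator]
    _ = _ := by
        rw [integral_fun_norm_addHaar μ ((Iio r).indicator f), ← Ioi_inter_Iio,
          ← setIntegral_indicator measurableSet_Iio]
        simp only [indicator_smul_apply]

lemma exists_setIntegral_ball_norm_rpow_mul_exp_le {a κ c : ℝ}
    (ha : -(Module.finrank ℝ E : ℝ) < a) (hκ : 0 < κ) (hc : 0 < c) (ε : ℝ) :
    ∃ C > (0 : ℝ), ∀ t : ℝ, 0 ≤ t →
      ∫ x in ball (0 : E) ε, ‖x‖ ^ a * exp (-2 * c * ‖x‖ ^ κ * t) ∂μ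
        ≤ C * (1 + t) ^ (-((a + Module.finrank ℝ E) / κ)) := by
  set d := Module.finrank ℝ E
  set α := (a + d) / κ
  have hd : 0 < d := Module.finrank_pos
  set p : ℝ := a + (d - 1 : ℕ)
  have hp : p + 1 = a + d := by push_cast [p, Nat.cast_sub hd]; ring
  refine ⟨d * μ.real (ball 0 1) * exp (c * ε ^ κ) * (c ^ (-α) * (1 / κ) * Gamma α), ?_, ?_⟩
  · have : 0 < μ.real (ball 0 1) :=
      ENNReal.toReal_pos (measure_ball_pos μ _ one_pos).ne' measure_ball_lt_top.ne
    have := Gamma_pos_of_pos (div_pos (by linarith) hκ : 0 < α)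
    positivity
  intro t ht
  rw [setIntegral_ball_fun_norm_addHaar μ (fun r ↦ r ^ a * exp (-2 * c * r ^ κ * t))]
  have hpolar : ∫ y in Ioo 0 ε, y ^ (d - 1) • (y ^ a * exp (-2 * c * y ^ κ * t))
      = ∫ y in Ioo 0 ε, y ^ p * exp (-2 * c * y ^ κ * t) := by
    refine setIntegral_congr_fun measurableSet_Ioo fun y hy ↦ ?_
    rw [smul_eq_mul, rpow_add hy.1, rpow_natCast]
    ring
  calc _ ≤ (d * μ.real (ball 0 1)) * (exp (c * ε ^ κ) *
          ((c * (1 + t)) ^ (-(p + 1) / κ) * (1 / κ) * Gamma ((p + 1) / κ))) := by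
        rw [nsmul_eq_mul, smul_eq_mul, hpolar, ← mul_assoc]
        gcongr
        exact setIntegral_Ioo_rpow_mul_exp_le ε (by linarith) hκ hc ht
    _ = _ := by
        rw [hp, mul_rpow hc.le (by linarith), neg_div]
        ring

theorem stmt12_general (s c ε ρ : ℝ) (hs : 0 ≤ s) (hc : 0 < c)
    (hρ : ρ < 1/2) :
    ∃ C > (0:ℝ), ∀ t : ℝ, 0 ≤ t →
      ∫ ξ in {ξ : EuclideanSpace ℝ (Fin 2) | ‖ξ‖ < ε},
          ‖ξ‖ ^ (2*s) * Real.exp (-2 * c * ‖ξ‖ ^ (2 - 2*ρ) * t)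
        ≤ C * (1 + t) ^ (-((2*s + 2) / (2 - 2*ρ))) := by
  have hdim : (Module.finrank ℝ (EuclideanSpace ℝ (Fin 2)) : ℝ) = 2 := by
    rw [finrank_euclideanSpace_fin, Nat.cast_ofNat]
  obtain ⟨C, hC, hbound⟩ := exists_setIntegral_ball_norm_rpow_mul_exp_le
    (volume : Measure (EuclideanSpace ℝ (Fin 2))) (a := 2 * s) (κ := 2 - 2 * ρ)
    (by rw [hdim]; linarith) (by linarith) hc ε
  rw [hdim] at hbound
  exact ⟨C, hC, fun t ht ↦ by simpa only [ball_zero_eq] using hbound t ht⟩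

/-- Workhorse integral estimate: for `s ≥ 0`, `c > 0`, `ε > 0`, `0 ≤ ρ < 1/2`, there is `C > 0`
with `∫_{|ξ|<ε} |ξ|^{2s} e^{−2c|ξ|^{2−2ρ}t} dξ ≤ C (1+t)^{−(2s+2)/(2−2ρ)}` for every `t ≥ 0`. -/
theorem stmt12 (s c ε ρ : ℝ) (hs : 0 ≤ s) (hc : 0 < c) (hε : 0 < ε)
    (hρ0 : 0 ≤ ρ) (hρ : ρ < 1/2) :
    ∃ C > (0:ℝ), ∀ t : ℝ, 0 ≤ t →
      ∫ ξ in {ξ : EuclideanSpace ℝ (Fin 2) | ‖ξ‖ < ε},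
          ‖ξ‖ ^ (2*s) * Real.exp (-2 * c * ‖ξ‖ ^ (2 - 2*ρ) * t)
        ≤ C * (1 + t) ^ (-((2*s + 2) / (2 - 2*ρ))) :=
  stmt12_general s c ε ρ hs hc hρ
end Polar
end
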